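/- Let λ ∈ ℝ^m with λ_i ≥ 0 for all i and λ not identically zero, Λ = diag(λ). Let g_1,…,g_n : ℝ^m → ℝ be continuously differentiable and Λ-quasi-homogeneous, L(θ) = (1/n) Σ_i e^{−g_i(θ)}, and q_min(θ) = min_i g_i(θ). Let θ : [0, ∞) → ℝ^m be a differentiable solution of the gradient flow θ'(t) = −∇L(θ(t)) and suppose L(θ(t_0)) < 1/n for some t_0 ≥ 0. Then as t → ∞: L(θ(t)) → 0 and q_min(θ(t)) → ∞. If moreover there exists k > 0 such that |g_i(θ̂(t))| ≤ k for all t ≥ 0 and all i ∈ [n], where θ̂(t) is the Λ-normalization of θ(t), then also ‖θ(t)‖_Λ → ∞. -/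

import Mathlib

open Filter

/-- The quasi-homogeneous scaling map `θ ↦ e^{αΛ}θ`, where `Λ = diag(l)`. -/
noncomputable def qhScale {m : ℕ} (l : Fin m → ℝ) (α : ℝ)
    (θ : EuclideanSpace ℝ (Fin m)) : EuclideanSpace ℝ (Fin m) :=
  WithLp.toLp 2 (fun i => Real.exp (α * l i) * θ i)

/-- The `Λ`-seminorm `‖θ‖_Λ = sqrt (Σ_i λ_i θ_i²)`. -/
noncomputable def qhNorm {m : ℕ} (l : Fin m → ℝ)
    (θ : EuclideanSpace ℝ (Fin m)) : ℝ :=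
  Real.sqrt (∑ i, l i * θ i ^ 2)

/-- The exponential loss `L(θ) = (1/n) Σ_i e^{−g_i(θ)}`. -/
noncomputable def expLoss {m n : ℕ} (g : Fin n → EuclideanSpace ℝ (Fin m) → ℝ)
    (θ : EuclideanSpace ℝ (Fin m)) : ℝ :=
  (1 / n) * ∑ i, Real.exp (-(g i θ))

/-- Coordinatewise multiplication by `l` (the map `θ ↦ Λθ`). -/
noncomputable def lmul {m : ℕ} (l : Fin m → ℝ) (x : EuclideanSpace ℝ (Fin m)) :
    EuclideanSpace ℝ (Fin m) := WithLp.toLp 2 (fun j => l j * x j)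

lemma lmul_apply {m : ℕ} (l : Fin m → ℝ) (x : EuclideanSpace ℝ (Fin m)) (j : Fin m) :
    lmul l x j = l j * x j := rfl

section helpers

open Real

variable {m n : ℕ}

lemma qhScale_zero (l : Fin m → ℝ) (x : EuclideanSpace ℝ (Fin m)) :
    qhScale l 0 x = x := by
  ext j; simp [qhScale]

lemma qhScale_add (l : Fin m → ℝ) (a b : ℝ) (x : EuclideanSpace ℝ (Fin m)) :
    qhScale l a (qhScale l b x) = qhScale l (a + b) x := by
  ext j
  show Real.exp (a * l j) * (Real.exp (b * l j) * x j) = Real.exp ((a+b) * l j) * x j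
  rw [add_mul, Real.exp_add]; ring

lemma expLoss_pos (hn : 0 < n) (g : Fin n → EuclideanSpace ℝ (Fin m) → ℝ)
    (x : EuclideanSpace ℝ (Fin m)) : 0 < expLoss g x := by
  have h1 : (0:ℝ) < ∑ i, Real.exp (-(g i x)) := by
    apply Finset.sum_pos (fun i _ => Real.exp_pos _)
    exact Finset.univ_nonempty_iff.2 (Fin.pos_iff_nonempty.mp hn)
  have hn' : (0:ℝ) < (n:ℝ) := by exact_mod_cast hn
  unfold expLoss
  positivity

lemma expLoss_contDiff (g : Fin n → EuclideanSpace ℝ (Fin m) → ℝ)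
    (hsmooth : ∀ i, ContDiff ℝ 1 (g i)) : ContDiff ℝ 1 (expLoss g) := by
  unfold expLoss
  exact ContDiff.mul contDiff_const <| ContDiff.sum fun i _ =>
    (Real.contDiff_exp.comp (hsmooth i).neg)

lemma hasFDerivAt_expLoss (g : Fin n → EuclideanSpace ℝ (Fin m) → ℝ)
    (hsmooth : ∀ i, ContDiff ℝ 1 (g i)) (x : EuclideanSpace ℝ (Fin m)) :
    HasFDerivAt (expLoss g)
      ((1 / n : ℝ) • ∑ i, (-(Real.exp (-(g i x)))) • fderiv ℝ (g i) x) x := by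
  have h : ∀ i : Fin n, HasFDerivAt (fun θ => Real.exp (-(g i θ)))
      ((-(Real.exp (-(g i x)))) • fderiv ℝ (g i) x) x := by
    intro i
    have hd := ((hsmooth i).differentiable one_ne_zero x).hasFDerivAt
    have h2 := hd.neg.exp
    rw [smul_neg, ← neg_smul] at h2
    exact h2
  have hsum : HasFDerivAt (fun θ => ∑ i, Real.exp (-(g i θ)))
      (∑ i, (-(Real.exp (-(g i x)))) • fderiv ℝ (g i) x) x :=
    HasFDerivAt.fun_sum (fun i _ => h i)
  exact hsum.const_mul _

lemma euler {l : Fin m → ℝ} {f : EuclideanSpace ℝ (Fin m) → ℝ}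
    (hsm : ContDiff ℝ 1 f)
    (hqh : ∀ (α : ℝ) (x : EuclideanSpace ℝ (Fin m)),
      f (qhScale l α x) = Real.exp α * f x)
    (x : EuclideanSpace ℝ (Fin m)) :
    fderiv ℝ f x (lmul l x) = f x := by
  set v : EuclideanSpace ℝ (Fin m) := WithLp.toLp 2 (fun j => l j * x j) with hv
  have hrepr : ∀ α : ℝ, qhScale l α x =
      ∑ j, (Real.exp (α * l j) * x j) • EuclideanSpace.single j (1:ℝ) := by
    intro α
    ext i
    rw [WithLp.ofLp_sum, Finset.sum_apply]
    simp [qhScale, EuclideanSpace.single_apply]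
  have hvrepr : v = ∑ j, (l j * x j) • EuclideanSpace.single j (1:ℝ) := by
    ext i
    rw [WithLp.ofLp_sum, Finset.sum_apply]
    simp [hv, lmul_apply, EuclideanSpace.single_apply]
  have hc : HasDerivAt (fun α : ℝ => qhScale l α x) v 0 := by
    rw [hvrepr]
    have : HasDerivAt (fun α : ℝ => ∑ j, (Real.exp (α * l j) * x j) • EuclideanSpace.single j (1:ℝ))
        (∑ j, (l j * x j) • EuclideanSpace.single j (1:ℝ)) 0 := by
      apply HasDerivAt.fun_sum
      intro j _
      have h1 : HasDerivAt (fun α : ℝ => α * l j) (l j) 0 := hasDerivAt_mul_const _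
      have h2 := (h1.exp.mul_const (x j)).smul_const (EuclideanSpace.single j (1:ℝ))
      convert h2 using 2
      simp
    exact this.congr_deriv rfl |>.congr_of_eventuallyEq (by
      filter_upwards with α
      rw [hrepr α])
  have hgc : HasDerivAt (fun α : ℝ => f (qhScale l α x)) (fderiv ℝ f x v) 0 := by
    have hfd := ((hsm.differentiable one_ne_zero) x).hasFDerivAt
    exact hfd.comp_hasDerivAt_of_eq 0 hc (qhScale_zero l x).symm
  have hexp : HasDerivAt (fun α : ℝ => Real.exp α * f x) (f x) 0 := by
    simpa using (Real.hasDerivAt_exp 0).mul_const (f x)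
  have heq : (fun α : ℝ => f (qhScale l α x)) = fun α : ℝ => Real.exp α * f x :=
    funext (fun α => hqh α x)
  rw [heq] at hgc
  exact hgc.unique hexp

lemma inner_gradient_eq (f : EuclideanSpace ℝ (Fin m) → ℝ)
    (x : EuclideanSpace ℝ (Fin m))
    (hf : DifferentiableAt ℝ f x) (v : EuclideanSpace ℝ (Fin m)) :
    (inner ℝ (gradient f x) v : ℝ) = fderiv ℝ f x v := by
  have h := hf.hasGradientAt
  have h2 := hasGradientAt_iff_hasFDerivAt.mp h
  rw [h2.fderiv]
  exact (InnerProductSpace.toDual_apply_apply (𝕜 := ℝ) (E := EuclideanSpace ℝ (Fin m)) (x := gradient f x) (y := v)).symm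

lemma deriv_loss_flow (hn : 0 < n) (g : Fin n → EuclideanSpace ℝ (Fin m) → ℝ)
    (hsmooth : ∀ i, ContDiff ℝ 1 (g i))
    (θ : ℝ → EuclideanSpace ℝ (Fin m))
    (hflow : ∀ t, 0 ≤ t → HasDerivAt θ (-gradient (expLoss g) (θ t)) t)
    (t : ℝ) (ht : 0 ≤ t) :
    HasDerivAt (fun s => expLoss g (θ s))
      (-‖gradient (expLoss g) (θ t)‖^2) t := by
  have hdiff : DifferentiableAt ℝ (expLoss g) (θ t) :=
    (expLoss_contDiff g hsmooth).differentiable one_ne_zero (θ t)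
  have h := hdiff.hasFDerivAt.comp_hasDerivAt t (hflow t ht)
  have heq : fderiv ℝ (expLoss g) (θ t) (-gradient (expLoss g) (θ t))
      = -‖gradient (expLoss g) (θ t)‖^2 := by
    rw [← inner_gradient_eq (expLoss g) (θ t) hdiff, inner_neg_right,
      real_inner_self_eq_norm_sq]
  rwa [heq] at h

lemma inner_grad_lambda (hn : 0 < n) (l : Fin m → ℝ)
    (g : Fin n → EuclideanSpace ℝ (Fin m) → ℝ)
    (hsmooth : ∀ i, ContDiff ℝ 1 (g i))
    (hqh : ∀ i (α : ℝ) (θ : EuclideanSpace ℝ (Fin m)),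
      g i (qhScale l α θ) = Real.exp α * g i θ)
    (x : EuclideanSpace ℝ (Fin m)) :
    (inner ℝ (gradient (expLoss g) x) (lmul l x) : ℝ)
      = -((1 / n : ℝ) * ∑ i, Real.exp (-(g i x)) * g i x) := by
  have hdiff : DifferentiableAt ℝ (expLoss g) x :=
    (expLoss_contDiff g hsmooth).differentiable one_ne_zero x
  rw [inner_gradient_eq (expLoss g) x hdiff]
  rw [(hasFDerivAt_expLoss g hsmooth x).fderiv]
  rw [ContinuousLinearMap.smul_apply, ContinuousLinearMap.sum_apply]
  have : ∀ i : Fin n, ((-(Real.exp (-(g i x)))) • fderiv ℝ (g i) x)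
      (lmul l x)
      = -(Real.exp (-(g i x)) * g i x) := by
    intro i
    rw [ContinuousLinearMap.smul_apply, euler (hsmooth i) (hqh i) x, smul_eq_mul]
    ring
  rw [Finset.sum_congr rfl (fun i _ => this i)]
  rw [Finset.sum_neg_distrib]
  simp [smul_eq_mul]

end helpers

set_option maxHeartbeats 1000000 in
/-- Divergence lemma (Lemma F.2, smooth setting): after separability, along the
gradient flow the loss converges to 0, the margin `q_min = min_i g_i` diverges
to ∞, and — provided the model outputs are bounded on the Λ-normalized
trajectory — the Λ-seminorm diverges to ∞. -/
theorem stmt_8 {m n : ℕ} (hn : 0 < n)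
    (l : Fin m → ℝ) (hl : ∀ i, 0 ≤ l i) (hl0 : l ≠ 0)
    (g : Fin n → EuclideanSpace ℝ (Fin m) → ℝ)
    (hsmooth : ∀ i, ContDiff ℝ 1 (g i))
    (hqh : ∀ i (α : ℝ) (θ : EuclideanSpace ℝ (Fin m)),
      g i (qhScale l α θ) = Real.exp α * g i θ)
    (θ : ℝ → EuclideanSpace ℝ (Fin m))
    (hflow : ∀ t, 0 ≤ t → HasDerivAt θ (-gradient (expLoss g) (θ t)) t)
    (t₀ : ℝ) (ht₀ : 0 ≤ t₀)
    (hsep : expLoss g (θ t₀) < 1 / n) :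
    Tendsto (fun t => expLoss g (θ t)) atTop (nhds 0) ∧
    Tendsto (fun t => ⨅ i, g i (θ t)) atTop atTop ∧
    ((∃ k > (0 : ℝ), ∀ t, 0 ≤ t → ∀ i, ∀ τ : ℝ,
        qhNorm l (qhScale l (-τ) (θ t)) = 1 →
        |g i (qhScale l (-τ) (θ t))| ≤ k) →
      Tendsto (fun t => qhNorm l (θ t)) atTop atTop) := by
  have hnemp : Nonempty (Fin n) := ⟨⟨0, hn⟩⟩
  have hnR : (0:ℝ) < n := by exact_mod_cast hn
  set Lf : ℝ → ℝ := fun t => expLoss g (θ t) with hLfdef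
  have hLpos : ∀ t, 0 < Lf t := fun t => expLoss_pos hn g (θ t)
  set Nf : ℝ → ℝ := fun t => ‖gradient (expLoss g) (θ t)‖^2 with hNfdef
  have hNnn : ∀ t, 0 ≤ Nf t := fun t => sq_nonneg _
  have hL' : ∀ t, 0 ≤ t → HasDerivAt Lf (-(Nf t)) t := fun t ht =>
    deriv_loss_flow hn g hsmooth θ hflow t ht
  have hgradcont : Continuous (fun x : EuclideanSpace ℝ (Fin m) => gradient (expLoss g) x) := by
    have h1 : Continuous (fun x => fderiv ℝ (expLoss g) x) :=
      (expLoss_contDiff g hsmooth).continuous_fderiv one_ne_zero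
    exact ((InnerProductSpace.toDual ℝ (EuclideanSpace ℝ (Fin m))).symm.continuous).comp h1
  have hθcont : ContinuousOn θ (Set.Ici 0) := fun t ht =>
    (hflow t ht).continuousAt.continuousWithinAt
  have hNcont : ContinuousOn Nf (Set.Ici 0) :=
    ((hgradcont.comp_continuousOn hθcont).norm.pow 2)
  -- FTC for the loss
  have hLint : ∀ a b, 0 ≤ a → a ≤ b → (∫ t in a..b, Nf t) = Lf a - Lf b := by
    intro a b ha hab
    have hsub : Set.uIcc a b ⊆ Set.Ici 0 := by
      rw [Set.uIcc_of_le hab]; exact fun x hx => le_trans ha hx.1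
    have hFTC := intervalIntegral.integral_eq_sub_of_hasDerivAt
      (f := Lf) (f' := fun t => -(Nf t))
      (fun t ht => hL' t (hsub ht)) ((hNcont.mono hsub).neg.intervalIntegrable)
    rw [intervalIntegral.integral_neg] at hFTC
    linarith
  have hLmono : ∀ a b, 0 ≤ a → a ≤ b → Lf b ≤ Lf a := by
    intro a b ha hab
    have h := hLint a b ha hab
    have h2 : 0 ≤ ∫ t in a..b, Nf t :=
      intervalIntegral.integral_nonneg hab (fun u _ => hNnn u)
    linarith
  -- step bound on the trajectory
  have hθstep : ∀ t, t₀ ≤ t → ∀ ε : ℝ, 0 < ε →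
      ‖θ t - θ t₀‖ ≤ Lf t₀ / (2*ε) + ε * (t - t₀) / 2 := by
    intro t ht ε hε
    have hsub : Set.uIcc t₀ t ⊆ Set.Ici 0 := by
      rw [Set.uIcc_of_le ht]; exact fun x hx => le_trans ht₀ hx.1
    have hderiv : ∀ s ∈ Set.uIcc t₀ t, HasDerivAt θ (-gradient (expLoss g) (θ s)) s :=
      fun s hs => hflow s (hsub hs)
    have hcont' : ContinuousOn (fun s => -gradient (expLoss g) (θ s)) (Set.uIcc t₀ t) :=
      ((hgradcont.comp_continuousOn (hθcont.mono hsub)).neg)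
    have hFTC := intervalIntegral.integral_eq_sub_of_hasDerivAt hderiv
      hcont'.intervalIntegrable
    have h1 : ‖θ t - θ t₀‖ ≤ ∫ s in t₀..t, ‖-gradient (expLoss g) (θ s)‖ := by
      rw [← hFTC]
      exact intervalIntegral.norm_integral_le_integral_norm ht
    have h2 : (∫ s in t₀..t, ‖-gradient (expLoss g) (θ s)‖) ≤
        ∫ s in t₀..t, (Nf s / (2*ε) + ε/2) := by
      apply intervalIntegral.integral_mono_on ht
      · exact ((hgradcont.comp_continuousOn (hθcont.mono hsub)).neg.norm).intervalIntegrable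
      · exact (((hNcont.mono hsub).div_const _).add continuousOn_const).intervalIntegrable
      · intro s _
        rw [norm_neg, ← sub_nonneg]
        have key : Nf s / (2*ε) + ε/2 - ‖gradient (expLoss g) (θ s)‖
            = (‖gradient (expLoss g) (θ s)‖ - ε)^2 / (2*ε) := by
          simp only [hNfdef]
          field_simp
          ring
        rw [key]
        positivity
    have h3 : (∫ s in t₀..t, (Nf s / (2*ε) + ε/2)) = (Lf t₀ - Lf t)/(2*ε) + ε*(t-t₀)/2 := by
      rw [intervalIntegral.integral_add
        (((hNcont.mono hsub).div_const _).intervalIntegrable) intervalIntegrable_const]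
      rw [show (fun s => Nf s / (2*ε)) = fun s => Nf s / (2*ε) from rfl]
      rw [intervalIntegral.integral_div, hLint t₀ t ht₀ ht, intervalIntegral.integral_const]
      rw [smul_eq_mul]; ring
    have h4 : (Lf t₀ - Lf t)/(2*ε) ≤ Lf t₀/(2*ε) := by
      gcongr
      linarith [hLpos t]
    have := h1.trans (h2.trans_eq h3)
    linarith
  -- closed-form sqrt bound
  have hθsqrt : ∀ t, t₀ ≤ t → ‖θ t‖ ≤ ‖θ t₀‖ + Real.sqrt (Lf t₀ * (t - t₀)) := by
    intro t ht
    rcases eq_or_lt_of_le ht with rfl|hlt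
    · simp [Real.sqrt_nonneg]
    · have hΔ : 0 < t - t₀ := by linarith
      have s1 : (0:ℝ) < Real.sqrt (Lf t₀) := Real.sqrt_pos.2 (hLpos t₀)
      have s2 : (0:ℝ) < Real.sqrt (t - t₀) := Real.sqrt_pos.2 hΔ
      have q1 : Real.sqrt (Lf t₀) ^ 2 = Lf t₀ := Real.sq_sqrt (hLpos t₀).le
      have q2 : Real.sqrt (t - t₀) ^ 2 = t - t₀ := Real.sq_sqrt hΔ.le
      set ε := Real.sqrt (Lf t₀) / Real.sqrt (t - t₀) with hεdef
      have hεpos : 0 < ε := div_pos s1 s2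
      have h := hθstep t ht ε hεpos
      have key : Lf t₀ / (2*ε) + ε * (t - t₀) / 2
          = Real.sqrt (Lf t₀ * (t - t₀)) := by
        rw [Real.sqrt_mul (hLpos t₀).le, hεdef]
        field_simp
        nlinarith [q1, q2, s1, s2]
      have htri : ‖θ t‖ ≤ ‖θ t₀‖ + ‖θ t - θ t₀‖ := by
        calc ‖θ t‖ = ‖θ t₀ + (θ t - θ t₀)‖ := by rw [add_sub_cancel]
        _ ≤ ‖θ t₀‖ + ‖θ t - θ t₀‖ := norm_add_le _ _
      linarith
  -- bound on the Λ-weighted norm of the trajectory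
  set C : ℝ := (∑ j, (l j)^2) + 1 with hCdef
  have hC1 : (1:ℝ) ≤ C := by
    have : (0:ℝ) ≤ ∑ j, (l j)^2 := Finset.sum_nonneg fun j _ => sq_nonneg _
    rw [hCdef]; linarith
  have hCpos : (0:ℝ) < C := lt_of_lt_of_le one_pos hC1
  have hnormsq : ∀ y : EuclideanSpace ℝ (Fin m), ‖y‖^2 = ∑ j, (y j)^2 := by
    intro y
    rw [EuclideanSpace.norm_eq, Real.sq_sqrt (Finset.sum_nonneg fun j _ => sq_nonneg _)]
    simp [Real.norm_eq_abs, sq_abs]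
  have hΛle : ∀ y : EuclideanSpace ℝ (Fin m),
      ‖lmul l y‖^2 ≤ C * ‖y‖^2 := by
    intro y
    rw [hnormsq (lmul l y), hnormsq y, Finset.mul_sum]
    apply Finset.sum_le_sum
    intro j _
    rw [lmul_apply]
    have hlj : (l j)^2 ≤ C := by
      rw [hCdef]
      have : (l j)^2 ≤ ∑ j', (l j')^2 :=
        Finset.single_le_sum (fun j' _ => sq_nonneg (l j')) (Finset.mem_univ j)
      linarith
    calc (l j * y j)^2 = (l j)^2 * (y j)^2 := by ring
    _ ≤ C * (y j)^2 := by nlinarith [sq_nonneg (y j)]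
  set A : ℝ := C * (2 * ‖θ t₀‖^2) + 1 with hAdef
  set B : ℝ := C * (2 * Lf t₀) with hBdef
  have hA1 : (1:ℝ) ≤ A := by
    have : (0:ℝ) ≤ C * (2 * ‖θ t₀‖^2) := by positivity
    rw [hAdef]; linarith
  have hBpos : (0:ℝ) < B := by
    have := hLpos t₀; rw [hBdef]; positivity
  have hΛbound : ∀ t, t₀ ≤ t →
      ‖lmul l (θ t)‖^2 ≤ A + B * (t - t₀) := by
    intro t ht
    have h1 := hΛle (θ t)
    have h2 := hθsqrt t ht
    have hs : Real.sqrt (Lf t₀ * (t - t₀)) ^ 2 = Lf t₀ * (t - t₀) := by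
      apply Real.sq_sqrt
      have := hLpos t₀; nlinarith
    have h3 : ‖θ t‖^2 ≤ 2 * ‖θ t₀‖^2 + 2 * (Lf t₀ * (t - t₀)) := by
      nlinarith [h2, hs, sq_nonneg (‖θ t₀‖ - Real.sqrt (Lf t₀ * (t - t₀))),
        norm_nonneg (θ t), norm_nonneg (θ t₀), Real.sqrt_nonneg (Lf t₀ * (t - t₀))]
    calc ‖lmul l (θ t)‖^2 ≤ C * ‖θ t‖^2 := h1
    _ ≤ C * (2 * ‖θ t₀‖^2 + 2 * (Lf t₀ * (t - t₀))) :=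
        mul_le_mul_of_nonneg_left h3 hCpos.le
    _ = C * (2 * ‖θ t₀‖^2) + B * (t - t₀) := by rw [hBdef]; ring
    _ ≤ A + B * (t - t₀) := by rw [hAdef]; linarith
  -- margin lower bound after t₀
  have hsum_eq : ∀ t, (∑ i, Real.exp (-(g i (θ t)))) = n * Lf t := by
    intro t
    have h : Lf t = (1/n : ℝ) * ∑ i, Real.exp (-(g i (θ t))) := rfl
    rw [h]; field_simp
  set q₀ : ℝ := -Real.log ((n:ℝ) * Lf t₀) with hq₀def
  have hnL : (0:ℝ) < (n:ℝ) * Lf t₀ := by have := hLpos t₀; positivity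
  have hnL1 : (n:ℝ) * Lf t₀ < 1 := by
    have h := hsep
    rw [lt_div_iff₀ hnR] at h
    linarith [h]
  have hq₀pos : 0 < q₀ := by
    rw [hq₀def]; have := Real.log_neg hnL hnL1; linarith
  have hgq : ∀ t, t₀ ≤ t → ∀ i, q₀ ≤ g i (θ t) := by
    intro t ht i
    have h1 : Real.exp (-(g i (θ t))) ≤ n * Lf t := by
      rw [← hsum_eq]
      exact Finset.single_le_sum (f := fun i => Real.exp (-(g i (θ t))))
        (fun i _ => (Real.exp_pos _).le) (Finset.mem_univ i)
    have h2 : (n:ℝ) * Lf t ≤ n * Lf t₀ := by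
      have := hLmono t₀ t ht₀ ht; nlinarith
    have h3 : Real.exp (-(g i (θ t))) ≤ Real.exp (-q₀) := by
      rw [hq₀def, neg_neg, Real.exp_log hnL]; linarith
    have h4 := Real.exp_le_exp.mp h3
    linarith
  -- inner product lower bound
  have hinner : ∀ t, t₀ ≤ t →
      q₀ * Lf t ≤ -(inner ℝ (gradient (expLoss g) (θ t)) (lmul l (θ t)) : ℝ) := by
    intro t ht
    rw [inner_grad_lambda hn l g hsmooth hqh (θ t), neg_neg]
    have h1 : ∀ i : Fin n, q₀ * Real.exp (-(g i (θ t)))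
        ≤ Real.exp (-(g i (θ t))) * g i (θ t) := by
      intro i
      have := hgq t ht i
      nlinarith [Real.exp_pos (-(g i (θ t)))]
    have h2 : (∑ i, q₀ * Real.exp (-(g i (θ t))))
        ≤ ∑ i, Real.exp (-(g i (θ t))) * g i (θ t) :=
      Finset.sum_le_sum fun i _ => h1 i
    have h3 : (∑ i, q₀ * Real.exp (-(g i (θ t)))) = q₀ * ((n:ℝ) * Lf t) := by
      rw [← Finset.mul_sum, hsum_eq]
    rw [h3] at h2
    have h4 := mul_le_mul_of_nonneg_left h2 (by positivity : (0:ℝ) ≤ 1/(n:ℝ))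
    have h5 : (1/(n:ℝ)) * (q₀ * ((n:ℝ) * Lf t)) = q₀ * Lf t := by
      field_simp
    linarith
  -- lower bound for the gradient norm squared
  have hNlow : ∀ t, t₀ ≤ t → q₀^2 * (Lf t)^2 ≤ Nf t * (A + B*(t-t₀)) := by
    intro t ht
    have hcs : -(inner ℝ (gradient (expLoss g) (θ t)) (lmul l (θ t)) : ℝ)
        ≤ ‖gradient (expLoss g) (θ t)‖ * ‖lmul l (θ t)‖ := by
      have h := abs_real_inner_le_norm (gradient (expLoss g) (θ t)) (lmul l (θ t))
      have h2 := neg_abs_le (inner ℝ (gradient (expLoss g) (θ t)) (lmul l (θ t)) : ℝ)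
      linarith
    have h1 : q₀ * Lf t ≤ ‖gradient (expLoss g) (θ t)‖ * ‖lmul l (θ t)‖ :=
      (hinner t ht).trans hcs
    have hNeq : Nf t = ‖gradient (expLoss g) (θ t)‖^2 := rfl
    have h4 := hΛbound t ht
    have e0 : 0 ≤ q₀ * Lf t := le_of_lt (mul_pos hq₀pos (hLpos t))
    have e1 : (q₀ * Lf t) * (q₀ * Lf t)
        ≤ (‖gradient (expLoss g) (θ t)‖ * ‖lmul l (θ t)‖)
          * (‖gradient (expLoss g) (θ t)‖ * ‖lmul l (θ t)‖) :=
      mul_self_le_mul_self e0 h1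
    have e2 : ‖gradient (expLoss g) (θ t)‖^2 * ‖lmul l (θ t)‖^2
        ≤ ‖gradient (expLoss g) (θ t)‖^2 * (A + B*(t-t₀)) :=
      mul_le_mul_of_nonneg_left h4 (sq_nonneg _)
    rw [hNeq]
    nlinarith [e1, e2]
  -- comparison function
  have hABpos : ∀ t, t₀ ≤ t → (0:ℝ) < A + B*(t - t₀) := by
    intro t ht; nlinarith
  set φ : ℝ → ℝ := fun t => (q₀^2 / B) * Real.log (A + B*(t - t₀)) with hφdef
  have hφ' : ∀ t, t₀ ≤ t → HasDerivAt φ (q₀^2 / (A + B*(t-t₀))) t := by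
    intro t ht
    have h1 : HasDerivAt (fun s : ℝ => A + B*(s - t₀)) B t := by
      simpa using (((hasDerivAt_id t).sub_const t₀).const_mul B).const_add A
    have h2 := (h1.log (hABpos t ht).ne')
    have h3 := h2.const_mul (q₀^2 / B)
    refine h3.congr_deriv ?_
    rw [mul_div, div_mul_cancel₀ _ hBpos.ne']
  set G : ℝ → ℝ := fun t => (Lf t)⁻¹ - φ t with hGdef
  have hG' : ∀ t, t₀ ≤ t →
      HasDerivAt G (Nf t / (Lf t)^2 - q₀^2/(A + B*(t-t₀))) t := by
    intro t ht
    have h1 := (hL' t (le_trans ht₀ ht)).inv (hLpos t).ne'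
    have h2 := h1.sub (hφ' t ht)
    refine h2.congr_deriv ?_
    ring
  have hGmono : MonotoneOn G (Set.Ici t₀) := by
    apply monotoneOn_of_deriv_nonneg (convex_Ici t₀)
    · exact fun t ht => (hG' t ht).continuousAt.continuousWithinAt
    · intro t ht
      rw [interior_Ici] at ht
      exact ((hG' t (le_of_lt ht)).differentiableAt).differentiableWithinAt
    · intro t ht
      rw [interior_Ici] at ht
      rw [(hG' t ht.le).deriv]
      have h1 := hNlow t ht.le
      have h2 := hABpos t ht.le
      have h3 := hLpos t
      rw [sub_nonneg, div_le_div_iff₀ h2 (by positivity)]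
      nlinarith
  have hFlow2 : ∀ t, t₀ ≤ t → (Lf t₀)⁻¹ - φ t₀ + φ t ≤ (Lf t)⁻¹ := by
    intro t ht
    have h := hGmono (Set.self_mem_Ici) (Set.mem_Ici.mpr ht) ht
    simp only [hGdef] at h
    linarith
  have hφtop : Tendsto φ atTop atTop := by
    rw [hφdef]
    apply Tendsto.const_mul_atTop (by positivity : (0:ℝ) < q₀^2 / B)
    apply Real.tendsto_log_atTop.comp
    have h1 : Tendsto (fun t:ℝ => t - t₀) atTop atTop :=
      tendsto_atTop_add_const_right _ (-t₀) tendsto_id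
    have h2 := h1.const_mul_atTop hBpos
    exact tendsto_atTop_add_const_left _ A h2
  have hFtop : Tendsto (fun t => (Lf t)⁻¹) atTop atTop := by
    apply tendsto_atTop_mono' atTop ?_
      (tendsto_atTop_add_const_left _ ((Lf t₀)⁻¹ - φ t₀) hφtop)
    filter_upwards [eventually_ge_atTop t₀] with t ht using hFlow2 t ht
  have hL0 : Tendsto Lf atTop (nhds 0) := by
    have h := tendsto_inv_atTop_zero.comp hFtop
    have h2 : ((fun r : ℝ => r⁻¹) ∘ fun t => (Lf t)⁻¹) = Lf := by
      funext t; simp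
    rwa [h2] at h
  -- second conjunct : margin divergence
  have hinf_ge : ∀ t, -Real.log ((n:ℝ)*Lf t) ≤ ⨅ i, g i (θ t) := by
    intro t
    apply le_ciInf
    intro i
    have h1 : Real.exp (-(g i (θ t))) ≤ (n:ℝ) * Lf t := by
      rw [← hsum_eq]
      exact Finset.single_le_sum (f := fun i => Real.exp (-(g i (θ t))))
        (fun i _ => (Real.exp_pos _).le) (Finset.mem_univ i)
    have hpos : (0:ℝ) < (n:ℝ) * Lf t := by have := hLpos t; positivity
    have h2 : Real.exp (-(g i (θ t))) ≤ Real.exp (Real.log ((n:ℝ)*Lf t)) := by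
      rw [Real.exp_log hpos]; exact h1
    have h3 := Real.exp_le_exp.mp h2
    linarith
  have hlogtop : Tendsto (fun t => -Real.log ((n:ℝ) * Lf t)) atTop atTop := by
    have h1 : Tendsto (fun t => (n:ℝ) * Lf t) atTop (nhdsWithin 0 (Set.Ioi 0)) := by
      apply tendsto_nhdsWithin_of_tendsto_nhds_of_eventually_within
      · have := hL0.const_mul (n:ℝ)
        simpa using this
      · filter_upwards with t
        have := hLpos t; exact Set.mem_Ioi.mpr (by positivity)
    have h2 := Real.tendsto_log_nhdsGT_zero.comp h1
    have h3 := tendsto_neg_atBot_atTop.comp h2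
    exact h3
  have hinftop : Tendsto (fun t => ⨅ i, g i (θ t)) atTop atTop :=
    tendsto_atTop_mono hinf_ge hlogtop
  refine ⟨hL0, hinftop, ?_⟩
  -- third conjunct
  rintro ⟨k, hk, hbd⟩
  obtain ⟨j₀, hj₀⟩ : ∃ j, l j ≠ 0 := by
    by_contra h; push_neg at h; exact hl0 (funext fun j => h j)
  set s : Finset (Fin m) := Finset.univ.filter (fun j => l j ≠ 0) with hsdef
  have hsne : s.Nonempty := ⟨j₀, by simp [hsdef, hj₀]⟩
  set lmin : ℝ := s.inf' hsne l with hlmindef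
  have hlmin_le : ∀ j, l j ≠ 0 → lmin ≤ l j := fun j hj =>
    Finset.inf'_le l (by simp [hsdef, hj])
  have hlminpos : 0 < lmin := by
    obtain ⟨j, hj, hjeq⟩ := Finset.exists_mem_eq_inf' hsne l
    have hjne : l j ≠ 0 := by simpa [hsdef] using hj
    rw [hlmindef, hjeq]
    exact lt_of_le_of_ne (hl j) (Ne.symm hjne)
  rw [tendsto_atTop]
  intro M
  set M' : ℝ := max M 1 with hM'def
  have hM'1 : (1:ℝ) ≤ M' := le_max_right _ _
  have hM'pos : (0:ℝ) < M' := lt_of_lt_of_le one_pos hM'1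
  set R : ℝ := k * Real.exp (Real.log M' / lmin) with hRdef
  have hRpos : 0 < R := by positivity
  filter_upwards [hinftop.eventually_ge_atTop R, eventually_ge_atTop t₀] with t hRt ht
  have ht0 : (0:ℝ) ≤ t := le_trans ht₀ ht
  have hqpos : 0 < ⨅ i, g i (θ t) := lt_of_lt_of_le hRpos hRt
  -- some coordinate with positive weight is nonzero
  have hxnz : ∃ j, l j ≠ 0 ∧ θ t j ≠ 0 := by
    by_contra h
    push_neg at h
    have hfix : ∀ α : ℝ, qhScale l α (θ t) = θ t := by
      intro α; ext j
      rcases eq_or_ne (l j) 0 with h0|h0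
      · show Real.exp (α * l j) * θ t j = θ t j
        rw [h0]; simp
      · have hz := h j h0
        show Real.exp (α * l j) * θ t j = θ t j
        rw [hz]; simp
    have hzero : ∀ i, g i (θ t) = 0 := by
      intro i
      have h1 := hqh i (Real.log 2) (θ t)
      rw [hfix, Real.exp_log (by norm_num : (0:ℝ) < 2)] at h1
      linarith
    have hzero2 : (⨅ i, g i (θ t)) = 0 := by
      simp [hzero]
    rw [hzero2] at hqpos
    exact lt_irrefl 0 hqpos
  obtain ⟨j₁, hlj₁, hxj₁⟩ := hxnz
  -- existence of the normalizing τ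
  set f : ℝ → ℝ := fun τ => ∑ j, l j * (Real.exp (-τ * l j) * θ t j)^2 with hfdef
  have hfcont : Continuous f := by
    apply continuous_finset_sum
    intro j _
    fun_prop
  have hfnonneg : ∀ τ (j : Fin m), 0 ≤ l j * (Real.exp (-τ * l j) * θ t j)^2 :=
    fun τ j => mul_nonneg (hl j) (sq_nonneg _)
  set c : ℝ := l j₁ * (θ t j₁)^2 with hcdef
  have hcpos : 0 < c := by
    rw [hcdef]
    exact mul_pos (lt_of_le_of_ne (hl j₁) (Ne.symm hlj₁)) (by positivity)
  have hτ1 : ∃ τ₁, 1 ≤ f τ₁ := by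
    refine ⟨-(Real.log (1/c))/(2*l j₁), ?_⟩
    have hlj₁pos : 0 < l j₁ := lt_of_le_of_ne (hl j₁) (Ne.symm hlj₁)
    have hterm : l j₁ * (Real.exp (-(-(Real.log (1/c))/(2*l j₁)) * l j₁) * θ t j₁)^2 = 1 := by
      rw [mul_pow, ← Real.exp_nat_mul]
      have harg : ((2:ℕ):ℝ) * (-(-(Real.log (1/c))/(2*l j₁)) * l j₁) = Real.log (1/c) := by
        push_cast
        field_simp
      rw [harg, Real.exp_log (by positivity : (0:ℝ) < 1/c)]
      rw [hcdef]
      field_simp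
    calc (1:ℝ) = l j₁ * (Real.exp (-(-(Real.log (1/c))/(2*l j₁)) * l j₁) * θ t j₁)^2 :=
          hterm.symm
    _ ≤ f (-(Real.log (1/c))/(2*l j₁)) :=
          Finset.single_le_sum (fun j _ => hfnonneg _ j) (Finset.mem_univ j₁)
  have hτ2 : ∃ τ₂, f τ₂ ≤ 1 ∧ 0 ≤ τ₂ := by
    set T : ℝ := ∑ j, l j * (θ t j)^2 with hTdef
    have hTpos : 0 < T := by
      have : c ≤ T := by
        rw [hcdef, hTdef]
        exact Finset.single_le_sum (f := fun j => l j * (θ t j)^2)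
          (fun j _ => mul_nonneg (hl j) (sq_nonneg _)) (Finset.mem_univ j₁)
      linarith
    set τ₂ : ℝ := max 0 (Real.log T / (2*lmin)) with hτ₂def
    have hτ₂0 : 0 ≤ τ₂ := le_max_left _ _
    refine ⟨τ₂, ?_, hτ₂0⟩
    have hbound : ∀ j, l j * (Real.exp (-τ₂ * l j) * θ t j)^2
        ≤ Real.exp (-(2*τ₂*lmin)) * (l j * (θ t j)^2) := by
      intro j
      rcases eq_or_ne (l j) 0 with h0|h0
      · rw [h0]; simp
      · have hlj : lmin ≤ l j := hlmin_le j h0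
        rw [mul_pow, ← Real.exp_nat_mul]
        have hexple : Real.exp (((2:ℕ):ℝ) * (-τ₂ * l j)) ≤ Real.exp (-(2*τ₂*lmin)) := by
          apply Real.exp_le_exp.mpr
          push_cast
          nlinarith [hτ₂0, hlj, hlminpos]
        calc l j * (Real.exp (((2:ℕ):ℝ) * (-τ₂ * l j)) * (θ t j)^2)
            ≤ l j * (Real.exp (-(2*τ₂*lmin)) * (θ t j)^2) := by
              apply mul_le_mul_of_nonneg_left _ (hl j)
              exact mul_le_mul_of_nonneg_right hexple (sq_nonneg _)
        _ = Real.exp (-(2*τ₂*lmin)) * (l j * (θ t j)^2) := by ring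
    have hsumle : f τ₂ ≤ Real.exp (-(2*τ₂*lmin)) * T := by
      rw [hfdef, hTdef, Finset.mul_sum]
      exact Finset.sum_le_sum fun j _ => hbound j
    have hfin : Real.exp (-(2*τ₂*lmin)) * T ≤ 1 := by
      have hτ₂ge : Real.log T / (2*lmin) ≤ τ₂ := le_max_right _ _
      have h1 : Real.log T ≤ 2*τ₂*lmin := by
        rw [div_le_iff₀ (by positivity : (0:ℝ) < 2*lmin)] at hτ₂ge
        nlinarith
      have h2 : Real.exp (-(2*τ₂*lmin)) ≤ Real.exp (-Real.log T) :=
        Real.exp_le_exp.mpr (by linarith)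
      have h3 : Real.exp (-Real.log T) = 1/T := by
        rw [Real.exp_neg, Real.exp_log hTpos]; exact (one_div T).symm
      calc Real.exp (-(2*τ₂*lmin)) * T ≤ (1/T) * T := by
            rw [← h3]; exact mul_le_mul_of_nonneg_right h2 hTpos.le
      _ = 1 := by field_simp
    linarith
  obtain ⟨τ₁, hτ₁⟩ := hτ1
  obtain ⟨τ₂, hτ₂, _⟩ := hτ2
  have hIVT : ∃ τ, f τ = 1 := by
    have h := intermediate_value_uIcc (a := τ₂) (b := τ₁) hfcont.continuousOn
    have h1mem : (1:ℝ) ∈ Set.uIcc (f τ₂) (f τ₁) := by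
      rw [Set.mem_uIcc]; left; exact ⟨hτ₂, hτ₁⟩
    obtain ⟨τ, _, hτ⟩ := h h1mem
    exact ⟨τ, hτ⟩
  obtain ⟨τ, hfτ⟩ := hIVT
  -- normalization
  have hqn : qhNorm l (qhScale l (-τ) (θ t)) = 1 := by
    have : qhNorm l (qhScale l (-τ) (θ t)) = Real.sqrt (f τ) := rfl
    rw [this, hfτ, Real.sqrt_one]
  -- bounded outputs give a lower bound on τ
  have hgle : ∀ i, g i (θ t) ≤ Real.exp τ * k := by
    intro i
    have h1 := hbd t ht0 i τ hqn
    have h2 : θ t = qhScale l τ (qhScale l (-τ) (θ t)) := by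
      rw [qhScale_add, add_neg_cancel, qhScale_zero]
    have h3 : g i (θ t) = Real.exp τ * g i (qhScale l (-τ) (θ t)) := by
      conv_lhs => rw [h2]
      exact hqh i τ _
    rw [h3]
    have h4 : g i (qhScale l (-τ) (θ t)) ≤ k := le_of_abs_le h1
    exact mul_le_mul_of_nonneg_left h4 (Real.exp_pos τ).le
  have hRle : R ≤ Real.exp τ * k := by
    have h1 : (⨅ i, g i (θ t)) ≤ g ⟨0, hn⟩ (θ t) :=
      ciInf_le (Set.Finite.bddBelow (Set.finite_range _)) (⟨0, hn⟩ : Fin n)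
    exact le_trans hRt (le_trans h1 (hgle ⟨0, hn⟩))
  have hτge : Real.log M' / lmin ≤ τ := by
    have h1 : Real.exp (Real.log M' / lmin) ≤ Real.exp τ := by
      rw [hRdef] at hRle
      exact le_of_mul_le_mul_right
        (by linarith [hRle] : Real.exp (Real.log M' / lmin) * k ≤ Real.exp τ * k) hk
    exact Real.exp_le_exp.mp h1
  have hτ0 : 0 ≤ τ := by
    have h1 : 0 ≤ Real.log M' := Real.log_nonneg hM'1
    have := div_nonneg h1 hlminpos.le
    linarith
  -- final norm lower bound
  have hsumge : Real.exp (2*τ*lmin) * f τ ≤ ∑ j, l j * (θ t j)^2 := by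
    rw [hfdef, Finset.mul_sum]
    apply Finset.sum_le_sum
    intro j _
    rcases eq_or_ne (l j) 0 with h0|h0
    · rw [h0]; simp
    · have hlj : lmin ≤ l j := hlmin_le j h0
      rw [mul_pow, ← Real.exp_nat_mul]
      have hkey : Real.exp (2*τ*lmin) * Real.exp (((2:ℕ):ℝ) * (-τ * l j)) ≤ 1 := by
        rw [← Real.exp_add]
        apply Real.exp_le_one_iff.mpr
        push_cast
        nlinarith [hτ0, hlj, hlminpos]
      calc Real.exp (2*τ*lmin) * (l j * (Real.exp (((2:ℕ):ℝ) * (-τ * l j)) * (θ t j)^2))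
          = (Real.exp (2*τ*lmin) * Real.exp (((2:ℕ):ℝ) * (-τ * l j))) * (l j * (θ t j)^2) := by
            ring
      _ ≤ 1 * (l j * (θ t j)^2) :=
            mul_le_mul_of_nonneg_right hkey (mul_nonneg (hl j) (sq_nonneg _))
      _ = l j * (θ t j)^2 := one_mul _
  have h1 : Real.exp (2*τ*lmin) ≤ ∑ j, l j * (θ t j)^2 := by
    rw [hfτ, mul_one] at hsumge
    exact hsumge
  have h2 : qhNorm l (θ t) = Real.sqrt (∑ j, l j * (θ t j)^2) := rfl
  have h3 : Real.sqrt (Real.exp (2*τ*lmin)) ≤ Real.sqrt (∑ j, l j * (θ t j)^2) :=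
    Real.sqrt_le_sqrt h1
  have h4 : Real.sqrt (Real.exp (2*τ*lmin)) = Real.exp (τ*lmin) := by
    rw [show 2*τ*lmin = (τ*lmin) + (τ*lmin) by ring, Real.exp_add]
    exact Real.sqrt_mul_self (Real.exp_pos _).le
  have h5 : M' ≤ Real.exp (τ*lmin) := by
    have hlog : Real.log M' ≤ τ * lmin := by
      rw [div_le_iff₀ hlminpos] at hτge
      linarith
    calc M' = Real.exp (Real.log M') := (Real.exp_log hM'pos).symm
    _ ≤ Real.exp (τ*lmin) := Real.exp_le_exp.mpr hlog
  have h6 : M ≤ M' := le_max_left _ _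
  rw [h2]
  linarith [h3, h4 ▸ h3]
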